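/- arXiv:math/0404050 — 5 statements merged into one kernel-verified Lean document; each statement's English description precedes it below -/
import Mathlib

section
/- Let (x_j) be a sequence of positive real numbers with partial sums S_n = x_1 + ... + x_n. If liminf_{n→∞} S_n / n^{1/2} = c, then liminf_{n→∞} (log n)^{-1} ∑_{j=1}^n x_j^2 ≥ c^2 / 4. -/
open Filter Finset Topology

/-!
For `t ≥ 0`, completing the square gives `x_j ^ 2 ≥ t x_j / √j - t ^ 2 / (4 j)`. Summation by parts
writes `∑ x_j / √j` as `S_n / √(n+1) + ∑ S_j (1/√j - 1/√(j+1))`, and once `S_j ≥ t √j` each term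
of the last sum is at least `t / (2 (j+1))`, so `∑_{j ≤ n} x_j / √j ≥ (t/2) log n - O(1)`. Together
with `∑_{j ≤ n} 1/j ≤ 1 + log n` this yields `∑_{j ≤ n} x_j ^ 2 ≥ (t^2/4) log n - O(1)` for every
`t < c`.
-/

theorem sum_Icc_one_mul_eq_by_parts {R : Type*} [CommRing R] (f a : ℕ → R) (n : ℕ) :
    ∑ j ∈ Icc 1 n, f j * a j
      = (∑ j ∈ Icc 1 n, f j) * a (n + 1)
        + ∑ j ∈ Icc 1 n, (∑ i ∈ Icc 1 j, f i) * (a j - a (j + 1)) := by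
  induction n with
  | zero => simp
  | succ n ih =>
    simp only [sum_Icc_succ_top (Nat.le_add_left 1 n), ih]
    ring

theorem Real.log_add_one_sub_log_le_inv {u : ℝ} (hu : 0 < u) :
    Real.log (u + 1) - Real.log u ≤ u⁻¹ := by
  rw [← Real.log_div (by positivity) hu.ne']
  calc Real.log ((u + 1) / u) ≤ (u + 1) / u - 1 := Real.log_le_sub_one_of_pos (by positivity)
    _ = u⁻¹ := by field_simp; ring

theorem Real.inv_add_one_le_two_mul_sqrt_mul_sub {y : ℝ} (hy : 0 < y) :
    (y + 1)⁻¹ ≤ 2 * (√y * ((√y)⁻¹ - (√(y + 1))⁻¹)) := by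
  have hs2 : √(y + 1) ^ 2 = y + 1 := Real.sq_sqrt (by positivity)
  have hgm : √y * √(y + 1) ≤ y + 1 / 2 := by
    rw [← Real.sqrt_mul hy.le, Real.sqrt_le_left (by positivity)]
    nlinarith
  have hdiv : √y / √(y + 1) = √y * √(y + 1) / (y + 1) := by
    field_simp
    exact hs2.symm
  rw [mul_sub, mul_inv_cancel₀ (Real.sqrt_ne_zero'.2 hy), ← div_eq_mul_inv, hdiv]
  field_simp
  linarith

theorem mul_log_sub_le_sum_mul_inv_sqrt (x : ℕ → ℝ) {t : ℝ} (ht : 0 ≤ t) {N n : ℕ}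
    (hN : 1 ≤ N) (hNn : N ≤ n) (hS0 : ∀ j, 0 ≤ ∑ i ∈ Icc 1 j, x i)
    (hS : ∀ j, N ≤ j → t * √j ≤ ∑ i ∈ Icc 1 j, x i) :
    t / 2 * (Real.log (n + 2) - Real.log (N + 1)) ≤ ∑ j ∈ Icc 1 n, x j * (√j)⁻¹ := by
  set a : ℕ → ℝ := fun j => (√j)⁻¹
  have ha : ∀ j, 1 ≤ j → 0 ≤ a j - a (j + 1) := fun j hj =>
    sub_nonneg.2 (inv_anti₀ (Real.sqrt_pos.2 (by exact_mod_cast hj))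
      (Real.sqrt_le_sqrt (by exact_mod_cast j.le_succ)))
  have hterm : ∀ j ∈ Icc N n, t / 2 * (Real.log ((j + 1 : ℕ) + 1) - Real.log ((j : ℕ) + 1))
      ≤ (∑ i ∈ Icc 1 j, x i) * (a j - a (j + 1)) := by
    intro j hjNn
    have hNj : N ≤ j := (mem_Icc.1 hjNn).1
    have hj : 1 ≤ j := hN.trans hNj
    have hj0 : (0 : ℝ) < j := by exact_mod_cast hj
    have hgap := Real.inv_add_one_le_two_mul_sqrt_mul_sub hj0
    have hlog := Real.log_add_one_sub_log_le_inv (u := (j : ℝ) + 1) (by positivity)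
    push_cast at hgap ⊢
    calc t / 2 * (Real.log ((j : ℝ) + 1 + 1) - Real.log ((j : ℝ) + 1))
        ≤ t * (√j * (a j - a (j + 1))) := by
          simp only [a]; push_cast
          linarith [mul_le_mul_of_nonneg_left (hlog.trans hgap) ht]
      _ = (t * √j) * (a j - a (j + 1)) := by ring
      _ ≤ (∑ i ∈ Icc 1 j, x i) * (a j - a (j + 1)) :=
          mul_le_mul_of_nonneg_right (hS j hNj) (ha j hj)
  calc t / 2 * (Real.log (n + 2) - Real.log (N + 1))
      = ∑ j ∈ Icc N n, t / 2 * (Real.log ((j + 1 : ℕ) + 1) - Real.log ((j : ℕ) + 1)) := by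
        rw [← mul_sum, sum_Icc_sub hNn (fun j : ℕ => Real.log ((j : ℝ) + 1))]
        push_cast; ring_nf
    _ ≤ ∑ j ∈ Icc N n, (∑ i ∈ Icc 1 j, x i) * (a j - a (j + 1)) := sum_le_sum hterm
    _ ≤ ∑ j ∈ Icc 1 n, (∑ i ∈ Icc 1 j, x i) * (a j - a (j + 1)) :=
        sum_le_sum_of_subset_of_nonneg (Icc_subset_Icc_left hN)
          fun j hj _ => mul_nonneg (hS0 j) (ha j (mem_Icc.1 hj).1)
    _ ≤ (∑ j ∈ Icc 1 n, x j) * a (n + 1)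
          + ∑ j ∈ Icc 1 n, (∑ i ∈ Icc 1 j, x i) * (a j - a (j + 1)) :=
        le_add_of_nonneg_left (mul_nonneg (hS0 n) (by positivity))
    _ = ∑ j ∈ Icc 1 n, x j * a j := (sum_Icc_one_mul_eq_by_parts x a n).symm

theorem exists_sum_sq_ge_mul_log_sub (x : ℕ → ℝ) {t : ℝ} (ht : 0 ≤ t)
    (hS0 : ∀ n, 0 ≤ ∑ j ∈ Icc 1 n, x j)
    (hS : ∀ᶠ n : ℕ in atTop, t * √n ≤ ∑ j ∈ Icc 1 n, x j) :
    ∃ C, ∀ᶠ n : ℕ in atTop, t ^ 2 / 4 * Real.log n - C ≤ ∑ j ∈ Icc 1 n, x j ^ 2 := by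
  obtain ⟨N, hN⟩ := eventually_atTop.1 (hS.and (eventually_ge_atTop 1))
  refine ⟨t ^ 2 / 2 * Real.log (N + 1) + t ^ 2 / 4, ?_⟩
  filter_upwards [eventually_ge_atTop N] with n hn
  have hsquare : t * ∑ j ∈ Icc 1 n, x j * (√j)⁻¹ - t ^ 2 / 4 * ∑ j ∈ Icc 1 n, (j : ℝ)⁻¹
      ≤ ∑ j ∈ Icc 1 n, x j ^ 2 := by
    rw [mul_sum, mul_sum, ← sum_sub_distrib]
    refine sum_le_sum fun j _ => ?_
    have hinv : ((√j)⁻¹) ^ 2 = (j : ℝ)⁻¹ := by rw [inv_pow, Real.sq_sqrt j.cast_nonneg]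
    nlinarith [sq_nonneg (x j - t * (√j)⁻¹ / 2)]
  have hweighted := mul_log_sub_le_sum_mul_inv_sqrt x ht (hN N le_rfl).2 hn hS0
    fun j hj => (hN j hj).1
  have hharmonic : ∑ j ∈ Icc 1 n, (j : ℝ)⁻¹ ≤ 1 + Real.log n := by
    simpa [harmonic_eq_sum_Icc] using harmonic_le_one_add_log n
  have hlog : Real.log n ≤ Real.log (n + 2) :=
    Real.log_le_log (by exact_mod_cast (hN N le_rfl).2.trans hn) (by linarith)
  linarith [mul_le_mul_of_nonneg_left hweighted ht,
    mul_le_mul_of_nonneg_left hharmonic (by positivity : (0 : ℝ) ≤ t ^ 2 / 4),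
    mul_le_mul_of_nonneg_left hlog (by positivity : (0 : ℝ) ≤ t ^ 2 / 4)]

theorem le_liminf_div_of_eventually_mul_sub_le {ι : Type*} {l : Filter ι} [l.NeBot]
    {Q L : ι → ℝ} (hL : Tendsto L l atTop) {a C : ℝ} (h : ∀ᶠ i in l, a * L i - C ≤ Q i) :
    (a : EReal) ≤ liminf (fun i => ((Q i / L i : ℝ) : EReal)) l := by
  have hlim : Tendsto (fun i => ((a - C / L i : ℝ) : EReal)) l (𝓝 (a : EReal)) := by
    rw [EReal.tendsto_coe]
    simpa using tendsto_const_nhds.sub (tendsto_const_nhds.div_atTop hL)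
  rw [← hlim.liminf_eq]
  refine liminf_le_liminf ?_
  filter_upwards [h, hL.eventually_gt_atTop 0] with i hi hpos
  rw [EReal.coe_le_coe_iff, le_div_iff₀ hpos, sub_mul, div_mul_cancel₀ _ hpos.ne']
  exact hi

/-- If `x` is a sequence of positive reals with partial sums `S n = ∑_{j=1}^n x j` satisfying
`liminf S n / √n = c`, then `liminf (log n)⁻¹ ∑_{j=1}^n (x j)^2 ≥ c^2 / 4`. -/
theorem stmt0 (x : ℕ → ℝ) (hx : ∀ j, 1 ≤ j → 0 < x j) (c : ℝ)
    (hliminf : Filter.liminf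
      (fun n : ℕ => (((∑ j ∈ Finset.Icc 1 n, x j) / Real.sqrt n : ℝ) : EReal)) atTop
      = (c : EReal)) :
    ((c ^ 2 / 4 : ℝ) : EReal) ≤
      Filter.liminf
        (fun n : ℕ => (((∑ j ∈ Finset.Icc 1 n, (x j) ^ 2) / Real.log n : ℝ) : EReal)) atTop := by
  have hS0 : ∀ n, 0 ≤ ∑ j ∈ Icc 1 n, x j := fun n =>
    sum_nonneg fun j hj => (hx j (mem_Icc.1 hj).1).le
  have hc : 0 ≤ c := by
    rw [← EReal.coe_nonneg, ← hliminf]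
    exact le_liminf_of_le (by isBoundedDefault) (Eventually.of_forall fun n =>
      EReal.coe_nonneg.2 (div_nonneg (hS0 n) (Real.sqrt_nonneg _)))
  -- `max t 0` rather than `t`, so that `t ↑ c` also works when `c = 0`
  have hbound : ∀ t < c, ((max t 0 ^ 2 / 4 : ℝ) : EReal) ≤
      liminf (fun n : ℕ => (((∑ j ∈ Icc 1 n, x j ^ 2) / Real.log n : ℝ) : EReal)) atTop := by
    intro t htc
    have hev : ∀ᶠ n : ℕ in atTop, max t 0 * √n ≤ ∑ j ∈ Icc 1 n, x j := by
      filter_upwards [eventually_lt_of_lt_liminf (hliminf ▸ EReal.coe_lt_coe_iff.2 htc),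
        eventually_ge_atTop 1] with n hn hn1
      rw [max_mul_of_nonneg _ _ (Real.sqrt_nonneg _), zero_mul]
      exact max_le ((lt_div_iff₀ (Real.sqrt_pos.2 (by exact_mod_cast hn1))).1
        (EReal.coe_lt_coe_iff.1 hn)).le (hS0 n)
    obtain ⟨C, hC⟩ := exists_sum_sq_ge_mul_log_sub x (le_max_right t 0) hS0 hev
    exact le_liminf_div_of_eventually_mul_sub_le
      (Real.tendsto_log_atTop.comp tendsto_natCast_atTop_atTop) hC
  have hcont : Tendsto (fun t : ℝ => ((max t 0 ^ 2 / 4 : ℝ) : EReal)) (𝓝[<] c)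
      (𝓝 ((c ^ 2 / 4 : ℝ) : EReal)) := by
    have hcts : Continuous fun t : ℝ => ((max t 0 ^ 2 / 4 : ℝ) : EReal) :=
      continuous_coe_real_ereal.comp (by fun_prop)
    simpa [max_eq_left hc] using (hcts.tendsto c).mono_left nhdsWithin_le_nhds
  exact le_of_tendsto hcont (eventually_nhdsWithin_of_forall hbound)
end

section
/- Let (x_j) be positive reals with partial sums S_n satisfying S_n ≥ a·n^{1/2} for all n ≥ 1, where a > 0. Then for all n ≥ 2, ∑_{j=1}^n x_j^2 ≥ a^2 (log n) / 4. -/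
/-!
Abel summation turns the hypothesis `S_j ≥ a √j` into the lower bound
`∑_{j ≤ n} x_j / √j ≥ a + (a/2) (H_n - 1)`, because each step `1/√j - 1/√(j+1)` of the weights
is at least `1 / (2 √j (j+1))`. Completing the square, `x_j² ≥ a x_j / √j - a² / (4j)`, and
summing gives `∑ x_j² ≥ a² H_n / 4 + a² / 2 ≥ a² log n / 4`.
-/

open Finset

lemma sqrt_mul_sqrt_add_one_le {t : ℝ} (ht : 0 ≤ t) : √t * √(t + 1) ≤ t + 1 / 2 := by
  have hamgm := two_mul_le_add_sq (√t) (√(t + 1))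
  rw [Real.sq_sqrt ht, Real.sq_sqrt (by linarith)] at hamgm
  linarith

lemma div_sqrt_add_one_add_le_div_sqrt {S a t : ℝ} (ha : 0 ≤ a) (ht : 0 < t)
    (hS : a * √t ≤ S) : S / √(t + 1) + a / (2 * (t + 1)) ≤ S / √t := by
  have hs : 0 < √t := Real.sqrt_pos.mpr ht
  have hr : 0 < √(t + 1) := Real.sqrt_pos.mpr (by linarith)
  have hsr : √t ≤ √(t + 1) := Real.sqrt_le_sqrt (by linarith)
  have hr2 : √(t + 1) ^ 2 = t + 1 := Real.sq_sqrt (by linarith)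
  have hgap := sqrt_mul_sqrt_add_one_le ht.le
  have hkey : a * √t ≤ 2 * S * √(t + 1) * (√(t + 1) - √t) :=
    calc a * √t ≤ a * √t * (2 * √(t + 1) ^ 2 - 2 * (√t * √(t + 1))) :=
          le_mul_of_one_le_right (by positivity) (by linarith)
      _ = 2 * (a * √t) * √(t + 1) * (√(t + 1) - √t) := by ring
      _ ≤ 2 * S * √(t + 1) * (√(t + 1) - √t) := by gcongr
  rw [div_add_div _ _ hr.ne' (by positivity), div_le_div_iff₀ (by positivity) hs]
  linear_combination √(t + 1) * hkey + 2 * S * (√(t + 1) - √t) * hr2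

lemma partial_sum_div_sqrt_add_le_sum_div_sqrt {x : ℕ → ℝ} {a : ℝ} (ha : 0 ≤ a)
    (hS : ∀ n : ℕ, 1 ≤ n → a * √n ≤ ∑ j ∈ Icc 1 n, x j) {n : ℕ} (hn : 1 ≤ n) :
    (∑ j ∈ Icc 1 n, x j) / √n + a / 2 * (harmonic n - 1) ≤ ∑ j ∈ Icc 1 n, x j / √j := by
  induction n, hn using Nat.le_induction with
  | base => simp
  | succ n hn ih =>
    have hstep := div_sqrt_add_one_add_le_div_sqrt ha (by positivity) (hS n hn)
    rw [sum_Icc_succ_top (by omega), sum_Icc_succ_top (by omega), harmonic_succ]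
    push_cast at hstep ⊢
    calc (∑ j ∈ Icc 1 n, x j + x (n + 1)) / √(n + 1) + a / 2 * (harmonic n + ((n : ℝ) + 1)⁻¹ - 1)
        = (∑ j ∈ Icc 1 n, x j) / √(n + 1) + a / (2 * (n + 1))
          + a / 2 * (harmonic n - 1) + x (n + 1) / √(n + 1) := by
          field_simp; ring
      _ ≤ (∑ j ∈ Icc 1 n, x j) / √n + a / 2 * (harmonic n - 1) + x (n + 1) / √(n + 1) := by
        gcongr
      _ ≤ ∑ j ∈ Icc 1 n, x j / √j + x (n + 1) / √(n + 1) := by gcongr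

lemma mul_sub_sq_div_four_le_sq (c y : ℝ) : c * y - c ^ 2 / 4 ≤ y ^ 2 := by
  nlinarith [sq_nonneg (y - c / 2)]

lemma mul_sum_div_sqrt_sub_le_sum_sq (x : ℕ → ℝ) (a : ℝ) (n : ℕ) :
    a * ∑ j ∈ Icc 1 n, x j / √j - a ^ 2 / 4 * harmonic n ≤ ∑ j ∈ Icc 1 n, x j ^ 2 := by
  rw [harmonic_eq_sum_Icc, mul_sum, Rat.cast_sum, mul_sum, ← sum_sub_distrib]
  refine sum_le_sum fun j hj => ?_
  have hj : (0 : ℝ) ≤ j := by positivity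
  have key := mul_sub_sq_div_four_le_sq (a / √j) (x j)
  rw [div_pow, Real.sq_sqrt hj] at key
  push_cast
  calc a * (x j / √j) - a ^ 2 / 4 * (j : ℝ)⁻¹ = a / √j * x j - a ^ 2 / j / 4 := by ring
    _ ≤ x j ^ 2 := key

theorem stmt1_general (x : ℕ → ℝ) (a : ℝ) (ha : 0 < a)
    (hS : ∀ n : ℕ, 1 ≤ n → a * Real.sqrt n ≤ ∑ j ∈ Finset.Icc 1 n, x j) :
    ∀ n : ℕ, 2 ≤ n → a ^ 2 * Real.log n / 4 ≤ ∑ j ∈ Finset.Icc 1 n, (x j) ^ 2 := by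
  intro n hn
  have hn1 : 1 ≤ n := by omega
  have habel := partial_sum_div_sqrt_add_le_sum_div_sqrt ha.le hS hn1
  have hfirst : a ≤ (∑ j ∈ Icc 1 n, x j) / √n :=
    (le_div_iff₀ (Real.sqrt_pos.mpr (by positivity))).mpr (hS n hn1)
  have hlog : Real.log n ≤ harmonic n := by
    simpa using log_le_harmonic_floor (n : ℝ) (Nat.cast_nonneg n)
  have hsq := mul_sum_div_sqrt_sub_le_sum_sq x a n
  have hlower : a * (a + a / 2 * (harmonic n - 1)) ≤ a * ∑ j ∈ Icc 1 n, x j / √j :=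
    mul_le_mul_of_nonneg_left (by linarith) ha.le
  nlinarith [mul_le_mul_of_nonneg_left hlog (sq_nonneg a), sq_nonneg a]

/-- If `x` is a sequence of positive reals whose partial sums satisfy `S n ≥ a √n` for all
`n ≥ 1` (with `a > 0`), then `∑_{j=1}^n (x j)^2 ≥ a^2 (log n) / 4` for all `n ≥ 2`. -/
theorem stmt1 (x : ℕ → ℝ) (hx : ∀ j, 1 ≤ j → 0 < x j) (a : ℝ) (ha : 0 < a)
    (hS : ∀ n : ℕ, 1 ≤ n → a * Real.sqrt n ≤ ∑ j ∈ Finset.Icc 1 n, x j) :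
    ∀ n : ℕ, 2 ≤ n → a ^ 2 * Real.log n / 4 ≤ ∑ j ∈ Finset.Icc 1 n, (x j) ^ 2 :=
  stmt1_general x a ha hS
end

section
/- Let x_1 ≥ x_2 ≥ ... ≥ x_n > 0 be a nonincreasing finite sequence of positive reals with partial sums S_k = x_1 + ... + x_k satisfying S_k ≥ a·k^{1/2} for all 1 ≤ k ≤ n, where a > 0. Then ∑_{j=1}^n x_j^2 ≥ a ∑_{j=1}^n q_j x_j, where q_j := j^{1/2} − (j−1)^{1/2}. -/
open Finset

section AbelSummation

variable {R : Type*} [CommRing R] [LinearOrder R] [IsStrictOrderedRing R]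

/-- Abel summation, keeping the boundary term: each step trades `x (k + 1)` for the larger
`x k` in front of the nonnegative excess `∑ c - ∑ b` of the first `k` terms. -/
theorem sum_mul_add_sub_mul_le_sum_mul (n : ℕ) (b c x : ℕ → R)
    (hx : ∀ i j, 1 ≤ i → i ≤ j → j ≤ n → x j ≤ x i)
    (hdom : ∀ k, 1 ≤ k → k ≤ n → ∑ j ∈ Icc 1 k, b j ≤ ∑ j ∈ Icc 1 k, c j) :
    ∑ j ∈ Icc 1 n, b j * x j + (∑ j ∈ Icc 1 n, c j - ∑ j ∈ Icc 1 n, b j) * x n ≤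
      ∑ j ∈ Icc 1 n, c j * x j := by
  induction n with
  | zero => simp
  | succ n ih =>
    have ih := ih (fun i j hi hij hj => hx i j hi hij (hj.trans n.le_succ))
      (fun k hk hkn => hdom k hk (hkn.trans n.le_succ))
    have hstep : 0 ≤ (∑ j ∈ Icc 1 n, c j - ∑ j ∈ Icc 1 n, b j) * (x n - x (n + 1)) := by
      rcases n.eq_zero_or_pos with rfl | hn
      · simp
      · exact mul_nonneg (sub_nonneg.2 (hdom n hn n.le_succ))
          (sub_nonneg.2 (hx n (n + 1) hn n.le_succ le_rfl))
    simp only [sum_Icc_succ_top (Nat.le_add_left 1 n)]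
    linarith

theorem sum_mul_le_sum_mul_of_sum_le_sum (n : ℕ) (b c x : ℕ → R)
    (hx : ∀ i j, 1 ≤ i → i ≤ j → j ≤ n → x j ≤ x i) (hx₀ : ∀ j, 1 ≤ j → j ≤ n → 0 ≤ x j)
    (hdom : ∀ k, 1 ≤ k → k ≤ n → ∑ j ∈ Icc 1 k, b j ≤ ∑ j ∈ Icc 1 k, c j) :
    ∑ j ∈ Icc 1 n, b j * x j ≤ ∑ j ∈ Icc 1 n, c j * x j := by
  have h := sum_mul_add_sub_mul_le_sum_mul n b c x hx hdom
  rcases n.eq_zero_or_pos with rfl | hn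
  · simp
  · have hboundary := mul_nonneg (sub_nonneg.2 (hdom n hn le_rfl)) (hx₀ n hn le_rfl)
    linarith

end AbelSummation

theorem sum_Icc_sqrt_sub_sqrt (k : ℕ) :
    ∑ j ∈ Icc 1 k, (Real.sqrt j - Real.sqrt ((j : ℝ) - 1)) = Real.sqrt k := by
  induction k with
  | zero => simp
  | succ k ih =>
    rw [sum_Icc_succ_top (Nat.le_add_left 1 k), ih]
    push_cast
    ring_nf

theorem stmt5_general (n : ℕ) (x : ℕ → ℝ) (hpos : ∀ j, 1 ≤ j → j ≤ n → 0 < x j)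
    (hmono : ∀ i j, 1 ≤ i → i ≤ j → j ≤ n → x j ≤ x i)
    (a : ℝ)
    (hS : ∀ k, 1 ≤ k → k ≤ n → a * Real.sqrt k ≤ ∑ j ∈ Finset.Icc 1 k, x j) :
    a * ∑ j ∈ Finset.Icc 1 n, (Real.sqrt j - Real.sqrt ((j : ℝ) - 1)) * x j ≤
      ∑ j ∈ Finset.Icc 1 n, (x j) ^ 2 := by
  have hdom : ∀ k, 1 ≤ k → k ≤ n →
      ∑ j ∈ Icc 1 k, a * (Real.sqrt j - Real.sqrt ((j : ℝ) - 1)) ≤ ∑ j ∈ Icc 1 k, x j := by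
    intro k hk hkn
    rw [← mul_sum, sum_Icc_sqrt_sub_sqrt]
    exact hS k hk hkn
  have h := sum_mul_le_sum_mul_of_sum_le_sum n _ x x hmono
    (fun j hj hjn => (hpos j hj hjn).le) hdom
  simpa only [mul_sum, mul_assoc, sq] using h

/-- If `x 1 ≥ x 2 ≥ ... ≥ x n > 0` is nonincreasing with partial sums `S k ≥ a √k` for
`1 ≤ k ≤ n` (with `a > 0`), then `∑_{j=1}^n (x j)^2 ≥ a ∑_{j=1}^n q j * x j`,
where `q j := √j − √(j-1)`. -/
theorem stmt5 (n : ℕ) (x : ℕ → ℝ) (hpos : ∀ j, 1 ≤ j → j ≤ n → 0 < x j)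
    (hmono : ∀ i j, 1 ≤ i → i ≤ j → j ≤ n → x j ≤ x i)
    (a : ℝ) (ha : 0 < a)
    (hS : ∀ k, 1 ≤ k → k ≤ n → a * Real.sqrt k ≤ ∑ j ∈ Finset.Icc 1 k, x j) :
    a * ∑ j ∈ Finset.Icc 1 n, (Real.sqrt j - Real.sqrt ((j : ℝ) - 1)) * x j ≤
      ∑ j ∈ Finset.Icc 1 n, (x j) ^ 2 :=
  stmt5_general n x hpos hmono a hS
end

section
/- Let x_1 ≥ x_2 ≥ ... ≥ x_n > 0 be nonincreasing positive reals with partial sums S_k ≥ a·k^{1/2} for all 1 ≤ k ≤ n, where a > 0, and let q_j := j^{1/2} − (j−1)^{1/2}. Then ∑_{j=1}^n q_j x_j ≥ a ∑_{k=1}^n q_k^2. -/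
open Finset

/-! Writing `q j = √j - √(j-1)`, the partial sums of `a q` are `a √k`, so the hypothesis says that
the partial sums of `d = x - a q` are nonnegative. Since `q` is nonnegative and nonincreasing, Abel
summation then gives `∑ q d ≥ 0`. -/

namespace Real

theorem sqrt_sub_sqrt_sub_one_eq_inv {t : ℝ} (ht : 1 ≤ t) :
    √t - √(t - 1) = (√t + √(t - 1))⁻¹ := by
  refine eq_inv_of_mul_eq_one_left ?_
  rw [mul_comm, ← sq_sub_sq, sq_sqrt (by linarith), sq_sqrt (by linarith)]
  ring

theorem antitoneOn_sqrt_sub_sqrt_sub_one : AntitoneOn (fun t : ℝ => √t - √(t - 1)) (Set.Ici 1) := by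
  intro s hs t ht hst
  simp only [sqrt_sub_sqrt_sub_one_eq_inv hs, sqrt_sub_sqrt_sub_one_eq_inv ht]
  have hs_pos : 0 < √s := sqrt_pos.2 (by linarith [Set.mem_Ici.1 hs])
  exact inv_anti₀ (by positivity) (by gcongr)

theorem sum_Icc_sqrt_sub_sqrt_sub_one (n : ℕ) :
    ∑ j ∈ Icc 1 n, (√j - √((j : ℝ) - 1)) = √n := by
  induction n with
  | zero => simp
  | succ n ih =>
    rw [sum_Icc_succ_top (by omega), ih]
    push_cast
    ring_nf

end Real

theorem mul_sum_Icc_le_sum_Icc_mul {f d : ℕ → ℝ} {n : ℕ} (hf : AntitoneOn f (Set.Icc 1 n))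
    (hd : ∀ k ≤ n, 0 ≤ ∑ j ∈ Icc 1 k, d j) {m : ℕ} (hm : m ≤ n) :
    f m * ∑ j ∈ Icc 1 m, d j ≤ ∑ j ∈ Icc 1 m, f j * d j := by
  induction m with
  | zero => simp
  | succ m ih =>
    rw [sum_Icc_succ_top (by omega), sum_Icc_succ_top (by omega), mul_add]
    have hstep : f (m + 1) * ∑ j ∈ Icc 1 m, d j ≤ f m * ∑ j ∈ Icc 1 m, d j := by
      rcases m.eq_zero_or_pos with rfl | hm0
      · simp
      · exact mul_le_mul_of_nonneg_right
          (hf ⟨by omega, by omega⟩ ⟨by omega, hm⟩ (by omega)) (hd m (by omega))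
    linarith [ih (by omega)]

theorem sum_Icc_mul_nonneg_of_partial_sums_nonneg {f d : ℕ → ℝ} {n : ℕ}
    (hf : AntitoneOn f (Set.Icc 1 n)) (hfn : 0 ≤ f n) (hd : ∀ k ≤ n, 0 ≤ ∑ j ∈ Icc 1 k, d j) :
    0 ≤ ∑ j ∈ Icc 1 n, f j * d j :=
  (mul_nonneg hfn (hd n le_rfl)).trans (mul_sum_Icc_le_sum_Icc_mul hf hd le_rfl)

theorem stmt6_general (n : ℕ) (x : ℕ → ℝ) (a : ℝ)
    (hS : ∀ k, 1 ≤ k → k ≤ n → a * Real.sqrt k ≤ ∑ j ∈ Finset.Icc 1 k, x j) :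
    a * ∑ k ∈ Finset.Icc 1 n, (Real.sqrt k - Real.sqrt ((k : ℝ) - 1)) ^ 2 ≤
      ∑ j ∈ Finset.Icc 1 n, (Real.sqrt j - Real.sqrt ((j : ℝ) - 1)) * x j := by
  set q : ℕ → ℝ := fun j => √j - √((j : ℝ) - 1)
  have hq_anti : AntitoneOn q (Set.Icc 1 n) := fun i hi j hj hij =>
    Real.antitoneOn_sqrt_sub_sqrt_sub_one (by simpa using hi.1) (by simpa using hj.1)
      (by exact_mod_cast hij)
  have hq_nonneg : 0 ≤ q n := sub_nonneg.mpr (Real.sqrt_le_sqrt (by linarith))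
  have hd : ∀ k ≤ n, 0 ≤ ∑ j ∈ Icc 1 k, (x j - a * q j) := by
    intro k hk
    rcases k.eq_zero_or_pos with rfl | hk0
    · simp
    · rw [sum_sub_distrib, ← mul_sum, Real.sum_Icc_sqrt_sub_sqrt_sub_one]
      exact sub_nonneg.mpr (hS k hk0 hk)
  have key := sum_Icc_mul_nonneg_of_partial_sums_nonneg hq_anti hq_nonneg hd
  simp only [mul_sub, sum_sub_distrib, mul_left_comm _ a, ← mul_sum, ← sq] at key
  linarith

/-- If `x 1 ≥ ... ≥ x n > 0` is nonincreasing with partial sums `S k ≥ a √k` for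
`1 ≤ k ≤ n` (with `a > 0`), and `q j := √j − √(j-1)`, then
`∑_{j=1}^n q j * x j ≥ a ∑_{k=1}^n (q k)^2`. -/
theorem stmt6 (n : ℕ) (x : ℕ → ℝ) (hpos : ∀ j, 1 ≤ j → j ≤ n → 0 < x j)
    (hmono : ∀ i j, 1 ≤ i → i ≤ j → j ≤ n → x j ≤ x i)
    (a : ℝ) (ha : 0 < a)
    (hS : ∀ k, 1 ≤ k → k ≤ n → a * Real.sqrt k ≤ ∑ j ∈ Finset.Icc 1 k, x j) :
    a * ∑ k ∈ Finset.Icc 1 n, (Real.sqrt k - Real.sqrt ((k : ℝ) - 1)) ^ 2 ≤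
      ∑ j ∈ Finset.Icc 1 n, (Real.sqrt j - Real.sqrt ((j : ℝ) - 1)) * x j :=
  stmt6_general n x a hS
end

section
/- Let (x_j) be positive reals with ∑_{j=1}^n x_j ≥ a n^{1/2} − b for all n, where a > 0 and b ≥ 0. Then liminf_{n→∞} (log n)^{-1} ∑_{j=1}^n x_j^2 ≥ a^2/4. -/
open Filter Finset Real Topology

/-!
Weighting the `j`-th term by `w j = (j + 1)^{-1/2}` and using `x² ≥ a w x - a² w² / 4`, the sum
of squares is at least `a ∑ w x - (a² / 4) H_n`. Since `w` decreases, Abel summation turns the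
lower bound `a √n - b` on the partial sums into `∑ w x ≥ a ∑ w (√(j+1) - √j) - b`, and each term
`w (√(j+1) - √j)` is at least `1 / (2 (j + 1))`. Hence `∑ x² ≥ (a² / 4) H_n - a b`, and
`H_n ≥ log n`.
-/

theorem sum_Icc_one_eq_sum_range {M : Type*} [AddCommMonoid M] (f : ℕ → M) (n : ℕ) :
    ∑ j ∈ Icc 1 n, f j = ∑ j ∈ range n, f (j + 1) := by
  rw [range_eq_Ico, sum_Ico_add' f 0 n 1]
  rfl

theorem sub_le_two_mul_sqrt_mul_sub_sqrt {u v : ℝ} (hu : 0 ≤ u) (huv : u ≤ v) :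
    v - u ≤ 2 * √v * (√v - √u) := by
  have hsqrt : √u ≤ √v := sqrt_le_sqrt huv
  calc v - u = (√v - √u) * (√v + √u) := by
        linear_combination sq_sqrt hu - sq_sqrt (hu.trans huv)
    _ ≤ (√v - √u) * (2 * √v) := by gcongr; linarith
    _ = 2 * √v * (√v - √u) := by ring

theorem neg_mul_le_sum_mul_of_antitone {w d : ℕ → ℝ} {c : ℝ} (hw : Antitone w)
    (hd : ∀ n, -c ≤ ∑ j ∈ range n, d j) (n : ℕ) (hwn : 0 ≤ w n) :
    -(c * w 0) ≤ ∑ j ∈ range n, w j * d j := by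
  -- summation by parts, dropping the nonnegative terms `(w j - w (j + 1)) * (∑ i < j, d i + c)`
  have key : ∀ n, w n * (∑ j ∈ range n, d j + c) - c * w 0 ≤ ∑ j ∈ range n, w j * d j := by
    intro n
    induction n with
    | zero => simp [mul_comm]
    | succ n ih =>
      have hstep : w (n + 1) * (∑ j ∈ range (n + 1), d j + c)
          ≤ w n * (∑ j ∈ range (n + 1), d j + c) :=
        mul_le_mul_of_nonneg_right (hw n.le_succ) (by linarith [hd (n + 1)])
      simp only [sum_range_succ] at hstep ⊢
      linarith
  linarith [key n, mul_nonneg hwn (show 0 ≤ ∑ j ∈ range n, d j + c by linarith [hd n])]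

theorem inv_add_one_div_two_le_inv_sqrt_mul_sub_sqrt {u : ℝ} (hu : 0 ≤ u) :
    (u + 1)⁻¹ / 2 ≤ (√(u + 1))⁻¹ * (√(u + 1) - √u) := by
  have h := sub_le_two_mul_sqrt_mul_sub_sqrt hu (le_add_of_nonneg_right zero_le_one)
  rw [add_sub_cancel_left] at h
  have hsq : u + 1 = √(u + 1) ^ 2 := (sq_sqrt (by positivity)).symm
  have ht : 0 < √(u + 1) := sqrt_pos.2 (by positivity)
  generalize √(u + 1) = t at h hsq ht ⊢
  rw [hsq]
  field_simp
  linarith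

theorem cast_harmonic_eq_sum_range (n : ℕ) :
    (harmonic n : ℝ) = ∑ j ∈ range n, ((j : ℝ) + 1)⁻¹ := by
  simp [harmonic]

theorem half_mul_harmonic_sub_le_sum_inv_sqrt_mul {x : ℕ → ℝ} {a b : ℝ} (ha : 0 ≤ a)
    (hS : ∀ n : ℕ, a * √n - b ≤ ∑ j ∈ range n, x j) (n : ℕ) :
    a / 2 * harmonic n - b ≤ ∑ j ∈ range n, (√((j : ℝ) + 1))⁻¹ * x j := by
  set w : ℕ → ℝ := fun j => (√((j : ℝ) + 1))⁻¹
  set y : ℕ → ℝ := fun j => a * (√((j : ℝ) + 1) - √j)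
  have hw_anti : Antitone w := fun i j hij =>
    inv_anti₀ (sqrt_pos.2 (by positivity)) (sqrt_le_sqrt (by gcongr))
  have habel : -(b * w 0) ≤ ∑ j ∈ range n, w j * (x j - y j) := by
    refine neg_mul_le_sum_mul_of_antitone hw_anti (fun m => ?_) n (by positivity)
    have htel := sum_range_sub (fun j : ℕ => √(j : ℝ)) m
    push_cast at htel
    rw [sum_sub_distrib, ← mul_sum, htel]
    simpa using hS m
  have hextremal : a / 2 * harmonic n ≤ ∑ j ∈ range n, w j * y j := by
    rw [cast_harmonic_eq_sum_range, mul_sum]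
    refine sum_le_sum fun j _ => ?_
    nlinarith [inv_add_one_div_two_le_inv_sqrt_mul_sub_sqrt (Nat.cast_nonneg (α := ℝ) j)]
  have hsplit : ∑ j ∈ range n, w j * x j
      = ∑ j ∈ range n, w j * (x j - y j) + ∑ j ∈ range n, w j * y j := by
    rw [← sum_add_distrib]
    exact sum_congr rfl fun j _ => by ring
  have hw0 : w 0 = 1 := by simp [w]
  rw [hw0, mul_one] at habel
  linarith

theorem harmonic_mul_sub_le_sum_sq {x : ℕ → ℝ} {a b : ℝ} (ha : 0 ≤ a)
    (hS : ∀ n : ℕ, a * √n - b ≤ ∑ j ∈ range n, x j) (n : ℕ) :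
    a ^ 2 / 4 * harmonic n - a * b ≤ ∑ j ∈ range n, x j ^ 2 := by
  have hamgm : a * ∑ j ∈ range n, (√((j : ℝ) + 1))⁻¹ * x j - a ^ 2 / 4 * harmonic n
      ≤ ∑ j ∈ range n, x j ^ 2 := by
    rw [cast_harmonic_eq_sum_range, mul_sum, mul_sum, ← sum_sub_distrib]
    refine sum_le_sum fun j _ => ?_
    have hw_sq : ((√((j : ℝ) + 1))⁻¹) ^ 2 = ((j : ℝ) + 1)⁻¹ := by
      rw [inv_pow, sq_sqrt (by positivity)]
    rw [← hw_sq]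
    nlinarith [sq_nonneg (x j - a / 2 * (√((j : ℝ) + 1))⁻¹)]
  nlinarith [mul_le_mul_of_nonneg_left (half_mul_harmonic_sub_le_sum_inv_sqrt_mul ha hS n) ha]

theorem le_liminf_div_log_of_mul_log_sub_le {u : ℕ → ℝ} {c C : ℝ}
    (h : ∀ᶠ n : ℕ in atTop, c * log n - C ≤ u n) :
    (c : EReal) ≤ liminf (fun n : ℕ => ((u n / log n : ℝ) : EReal)) atTop := by
  have hlog : Tendsto (fun n : ℕ => log n) atTop atTop :=
    tendsto_log_atTop.comp tendsto_natCast_atTop_atTop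
  have hlim : Tendsto (fun n : ℕ => ((c - C / log n : ℝ) : EReal)) atTop (𝓝 (c : EReal)) :=
    EReal.tendsto_coe.2 (by simpa using tendsto_const_nhds.sub (hlog.const_div_atTop C))
  rw [← hlim.liminf_eq]
  refine liminf_le_liminf ?_
  filter_upwards [h, eventually_gt_atTop 1] with n hn hn1
  have hlog_pos : 0 < log n := log_pos (by exact_mod_cast hn1)
  refine EReal.coe_le_coe_iff.2 ?_
  rw [le_div_iff₀ hlog_pos, sub_mul, div_mul_cancel₀ _ hlog_pos.ne']
  exact hn

theorem stmt13_general (x : ℕ → ℝ) (a b : ℝ) (ha : 0 < a)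
    (hS : ∀ n : ℕ, a * Real.sqrt n - b ≤ ∑ j ∈ Finset.Icc 1 n, x j) :
    ((a ^ 2 / 4 : ℝ) : EReal) ≤
      Filter.liminf
        (fun n : ℕ => (((∑ j ∈ Finset.Icc 1 n, (x j) ^ 2) / Real.log n : ℝ) : EReal)) atTop := by
  refine le_liminf_div_log_of_mul_log_sub_le (C := a * b) (.of_forall fun (n : ℕ) => ?_)
  have hshift : ∀ m : ℕ, a * √m - b ≤ ∑ j ∈ range m, x (j + 1) := fun m =>
    sum_Icc_one_eq_sum_range x m ▸ hS m
  calc a ^ 2 / 4 * log n - a * b ≤ a ^ 2 / 4 * harmonic n - a * b := by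
        gcongr
        simpa using log_le_harmonic_floor n n.cast_nonneg
    _ ≤ ∑ j ∈ Icc 1 n, x j ^ 2 := by
        rw [sum_Icc_one_eq_sum_range (fun j => x j ^ 2)]
        exact harmonic_mul_sub_le_sum_sq ha.le hshift n

/-- If `x` is a sequence of positive reals with `∑_{j=1}^n x j ≥ a √n − b` for all `n`
(with `a > 0`, `b ≥ 0`), then `liminf (log n)⁻¹ ∑_{j=1}^n (x j)^2 ≥ a^2/4`. -/
theorem stmt13 (x : ℕ → ℝ) (hx : ∀ j, 1 ≤ j → 0 < x j) (a b : ℝ) (ha : 0 < a) (hb : 0 ≤ b)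
    (hS : ∀ n : ℕ, a * Real.sqrt n - b ≤ ∑ j ∈ Finset.Icc 1 n, x j) :
    ((a ^ 2 / 4 : ℝ) : EReal) ≤
      Filter.liminf
        (fun n : ℕ => (((∑ j ∈ Finset.Icc 1 n, (x j) ^ 2) / Real.log n : ℝ) : EReal)) atTop :=
  stmt13_general x a b ha hS
end
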